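/- arXiv:2309.02990 — 5 statements merged into one kernel-verified Lean document; each statement's English description precedes it below -/
import Mathlib

section
/- Let p = (c/n)^a for constants c > 0 and a ∈ (0,1], and let N be the number of maximal cliques in G(n,p). Then E[N] = O(n^x) where x = ⌈1/a⌉ - a * binomial(⌈1/a⌉, 2). In particular, for a = 1 (i.e. p = c/n), E[N] = O(n). -/
/-! Every maximal clique is a clique, and a fixed `k`-set spans a clique with probability
`p ^ C(k, 2)`, so the first moment gives `E[N] ≤ ∑ₖ nᵏ p ^ C(k, 2)`. For `p = (c/n)^a` the
`k`-th term is `(c^a) ^ C(k, 2) · n ^ (k - a C(k, 2))`; the exponent has increments `1 - a k`,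
so it is maximal at `K = ⌈1/a⌉`. Beyond `K` consecutive terms have ratio `n p^k ≤ n p^(K+1) → 0`,
so the tail is geometric and the whole sum is `O(n ^ (K - a C(K, 2)))`. -/

open MeasureTheory Filter Finset
open scoped ENNReal Classical Topology

noncomputable section

/-- The Erdős–Rényi graph determined by edge indicators `f`. -/
def erGraph (n : ℕ) (f : Sym2 (Fin n) → Bool) : SimpleGraph (Fin n) :=
  SimpleGraph.fromRel fun u v => f s(u, v) = true

/-- Product Bernoulli measure on edge indicators: each edge present independently
with probability `p`. -/
def erMeasure (n : ℕ) (p : ℝ≥0∞) (hp : p ≤ 1) :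
    Measure (Sym2 (Fin n) → Bool) :=
  Measure.pi fun _ => (PMF.bernoulli p.toNNReal (by simpa using ENNReal.toNNReal_mono ENNReal.one_ne_top hp)).toMeasure

/-- A maximal clique: a clique not contained in any larger clique. -/
def IsMaxClique {V : Type*} (G : SimpleGraph V) (s : Finset V) : Prop :=
  G.IsClique ↑s ∧ ∀ t : Finset V, G.IsClique ↑t → s ⊆ t → s = t

/-- Number of maximal cliques. -/
def maxCliqueCount (n : ℕ) (f : Sym2 (Fin n) → Bool) : ℕ :=
  Nat.card {s : Finset (Fin n) // IsMaxClique (erGraph n f) s}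

/-- Number of maximal cliques of size `k`. -/
def maxCliqueCountOfSize (n k : ℕ) (f : Sym2 (Fin n) → Bool) : ℕ :=
  Nat.card {s : Finset (Fin n) // s.card = k ∧ IsMaxClique (erGraph n f) s}

open SimpleGraph

instance {n : ℕ} {p : ℝ≥0∞} (hp : p ≤ 1) : IsProbabilityMeasure (erMeasure n p hp) := by
  unfold erMeasure; infer_instance

lemma erGraph_isClique_iff {n : ℕ} (f : Sym2 (Fin n) → Bool) (s : Finset (Fin n)) :
    (erGraph n f).IsClique (s : Set (Fin n)) ↔
      ∀ e ∈ s.offDiag.image Sym2.mk.uncurry, f e = true := by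
  simp only [isClique_iff, Set.Pairwise, erGraph, fromRel_adj, Finset.mem_coe, Finset.mem_image,
    Finset.mem_offDiag, Prod.exists, Function.uncurry_apply_pair]
  constructor
  · rintro h _ ⟨x, y, ⟨hx, hy, hxy⟩, rfl⟩
    obtain ⟨-, h | h⟩ := h hx hy hxy
    · exact h
    · rwa [Sym2.eq_swap]
  · exact fun h x hx y hy hxy => ⟨hxy, .inl (h _ ⟨x, y, ⟨hx, hy, hxy⟩, rfl⟩)⟩

lemma erMeasure_isClique {n : ℕ} {p : ℝ≥0∞} (hp : p ≤ 1) (s : Finset (Fin n)) :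
    erMeasure n p hp {f | (erGraph n f).IsClique (s : Set (Fin n))} = p ^ (#s).choose 2 := by
  have hclique : {f | (erGraph n f).IsClique (s : Set (Fin n))} =
      (↑(s.offDiag.image Sym2.mk.uncurry) : Set (Sym2 (Fin n))).pi fun _ => {true} := by
    ext f
    simp [erGraph_isClique_iff]
  rw [hclique, erMeasure, Measure.pi_pi_finset, Finset.prod_congr rfl fun _ _ =>
    PMF.toMeasure_apply_singleton _ _ (measurableSet_singleton _), Finset.prod_const,
    Sym2.card_image_offDiag]
  exact congrArg (· ^ _) ((PMF.bernoulli_apply _ true).trans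
    (ENNReal.coe_toNNReal (ne_top_of_le_ne_top ENNReal.one_ne_top hp)))

lemma integral_maxCliqueCount_le_sum_choose {n : ℕ} {p : ℝ≥0∞} (hp : p ≤ 1) :
    ∫ f, (maxCliqueCount n f : ℝ) ∂erMeasure n p hp ≤
      ∑ k ∈ range (n + 1), (n.choose k : ℝ) * p.toReal ^ k.choose 2 := by
  let cliqueEvent (s : Finset (Fin n)) : Set (Sym2 (Fin n) → Bool) :=
    {f | (erGraph n f).IsClique (s : Set (Fin n))}
  have hcount (f) : (maxCliqueCount n f : ℝ) ≤ ∑ s, (cliqueEvent s).indicator 1 f := by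
    rw [maxCliqueCount, Nat.card_eq_fintype_card, Fintype.card_subtype]
    calc (#{s | IsMaxClique (erGraph n f) s} : ℝ)
        ≤ #{s | f ∈ cliqueEvent s} := by
          gcongr with s; exact fun h => h.1
      _ = _ := by simp only [Finset.natCast_card_filter, Set.indicator_apply, Pi.one_apply]
  calc ∫ f, (maxCliqueCount n f : ℝ) ∂erMeasure n p hp
      ≤ ∫ f, ∑ s, (cliqueEvent s).indicator 1 f ∂erMeasure n p hp :=
        integral_mono .of_finite .of_finite hcount
    _ = ∑ s : Finset (Fin n), p.toReal ^ (#s).choose 2 := by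
        rw [integral_finsetSum _ fun _ _ => .of_finite]
        refine Finset.sum_congr rfl fun s _ => ?_
        rw [integral_indicator_one .of_discrete, measureReal_def, erMeasure_isClique,
          ENNReal.toReal_pow]
    _ = _ := by
        rw [← Finset.powerset_univ, Finset.sum_powerset_apply_card (fun k => p.toReal ^ k.choose 2),
          Finset.card_univ, Fintype.card_fin]
        simp only [nsmul_eq_mul]

lemma integral_maxCliqueCount_ofReal_le_sum_pow {n : ℕ} {r : ℝ} (hr : 0 ≤ r) :
    ∫ f, (maxCliqueCount n f : ℝ) ∂erMeasure n (min (ENNReal.ofReal r) 1) (min_le_right _ _) ≤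
      ∑ k ∈ range (n + 1), (n : ℝ) ^ k * r ^ k.choose 2 := by
  have hp : (min (ENNReal.ofReal r) 1).toReal ≤ r := by
    simpa [ENNReal.toReal_ofReal hr] using
      ENNReal.toReal_mono ENNReal.ofReal_ne_top (min_le_left (ENNReal.ofReal r) 1)
  refine (integral_maxCliqueCount_le_sum_choose _).trans (Finset.sum_le_sum fun k _ => ?_)
  gcongr
  exact_mod_cast Nat.choose_le_pow n k

section Asymptotics

open Real Asymptotics

variable {a c : ℝ}

lemma sub_mul_choose_two_le_ceil (ha : 0 < a) (k : ℕ) :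
    (k : ℝ) - a * k.choose 2 ≤ ⌈1 / a⌉₊ - a * ⌈1 / a⌉₊.choose 2 := by
  set K := ⌈1 / a⌉₊
  have hK : 1 ≤ a * K := by
    have := mul_le_mul_of_nonneg_left (Nat.le_ceil (1 / a)) ha.le
    rwa [mul_one_div_cancel ha.ne'] at this
  have hK' : a * (K - 1) < 1 := by
    have := mul_lt_mul_of_pos_left (Nat.ceil_lt_add_one (one_div_pos.2 ha).le) ha
    rw [mul_add, mul_one_div_cancel ha.ne'] at this
    linarith
  -- `g K - g k = (K - k) (2 - a (K + k - 1)) / 2` for `g j = j - a C(j, 2)`, and the two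
  -- factors have the same sign on either side of `K`.
  rw [Nat.cast_choose_two, Nat.cast_choose_two]
  rcases lt_trichotomy k K with hk | rfl | hk
  · have hk : (k : ℝ) + 1 ≤ K := by exact_mod_cast hk
    nlinarith [mul_le_mul_of_nonneg_left hk ha.le]
  · exact le_rfl
  · have hk : (K : ℝ) + 1 ≤ k := by exact_mod_cast hk
    nlinarith [mul_le_mul_of_nonneg_left hk ha.le]

lemma div_rpow_pow_eq (hc : 0 ≤ c) {x : ℝ} (hx : 0 < x) (j : ℕ) :
    ((c / x) ^ a) ^ j = (c ^ a) ^ j * x ^ (-(a * j)) := by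
  rw [div_rpow hc hx.le, div_pow, ← rpow_natCast (x ^ a), ← rpow_mul hx.le, rpow_neg hx.le,
    div_eq_mul_inv]

lemma pow_mul_rpow_pow_choose_two (hc : 0 ≤ c) {x : ℝ} (hx : 0 < x) (k : ℕ) :
    x ^ k * ((c / x) ^ a) ^ k.choose 2 = (c ^ a) ^ k.choose 2 * x ^ ((k : ℝ) - a * k.choose 2) := by
  rw [div_rpow_pow_eq hc hx, sub_eq_add_neg, rpow_add hx, rpow_natCast]
  ring

lemma eventually_mul_rpow_pow_le_half (hc : 0 ≤ c) {j : ℕ} (hj : 1 < a * j) :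
    ∀ᶠ n : ℕ in atTop, (n : ℝ) * ((c / n) ^ a) ^ j ≤ 1 / 2 := by
  have hlim : Tendsto (fun x : ℝ => (c ^ a) ^ j * x ^ (-(a * j - 1))) atTop (𝓝 0) := by
    have := (tendsto_rpow_neg_atTop (y := a * j - 1) (by linarith)).const_mul ((c ^ a) ^ j)
    rwa [mul_zero] at this
  filter_upwards [(hlim.comp tendsto_natCast_atTop_atTop).eventually
    (ge_mem_nhds (by norm_num : (0 : ℝ) < 1 / 2)), eventually_gt_atTop 0] with n hle hn
  have hn : (0 : ℝ) < n := by exact_mod_cast hn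
  calc (n : ℝ) * ((c / n) ^ a) ^ j = (c ^ a) ^ j * (n : ℝ) ^ (-(a * j - 1)) := by
        rw [div_rpow_pow_eq hc hn, neg_sub, sub_eq_neg_add, rpow_add hn, rpow_one]; ring
    _ ≤ 1 / 2 := hle

lemma sum_range_le_of_le_of_halving {t : ℕ → ℝ} {A : ℝ} {m : ℕ} (hA : 0 ≤ A)
    (hle : ∀ k ≤ m, t k ≤ A) (hhalf : ∀ k ≥ m, t (k + 1) ≤ t k / 2) (N : ℕ) :
    ∑ k ∈ range N, t k ≤ 2 ^ (m + 1) * A := by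
  have hsmall (k : ℕ) (hk : k ≤ m) : t k ≤ 2 ^ m * A * (1 / 2) ^ k := by
    have : (1 : ℝ) ≤ 2 ^ m * (1 / 2) ^ k :=
      calc (1 : ℝ) = 2 ^ m * (1 / 2) ^ m := by rw [← mul_pow]; norm_num
        _ ≤ 2 ^ m * (1 / 2) ^ k :=
          mul_le_mul_of_nonneg_left (pow_le_pow_of_le_one (by norm_num) (by norm_num) hk)
            (by positivity)
    nlinarith [hle k hk]
  have hgeom (k : ℕ) : t k ≤ 2 ^ m * A * (1 / 2) ^ k := by
    rcases le_total k m with hk | hk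
    · exact hsmall k hk
    induction k, hk using Nat.le_induction with
    | base => exact hsmall m le_rfl
    | succ k hk ih =>
      calc t (k + 1) ≤ t k / 2 := hhalf k hk
        _ ≤ 2 ^ m * A * (1 / 2) ^ k / 2 := by gcongr
        _ = 2 ^ m * A * (1 / 2) ^ (k + 1) := by ring
  calc ∑ k ∈ range N, t k ≤ ∑ k ∈ range N, 2 ^ m * A * (1 / 2) ^ k := sum_le_sum fun k _ => hgeom k
    _ = 2 ^ m * A * ∑ k ∈ range N, (1 / 2 : ℝ) ^ k := by rw [mul_sum]
    _ ≤ 2 ^ m * A * 2 := by gcongr; exact sum_geometric_two_le N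
    _ = 2 ^ (m + 1) * A := by ring

theorem sum_pow_mul_rpow_pow_choose_two_isBigO (hc : 0 ≤ c) (ha : 0 < a) :
    (fun n : ℕ => ∑ k ∈ range (n + 1), (n : ℝ) ^ k * ((c / n) ^ a) ^ k.choose 2) =O[atTop]
      fun n : ℕ => (n : ℝ) ^ ((⌈1 / a⌉₊ : ℝ) - a * (⌈1 / a⌉₊.choose 2 : ℝ)) := by
  set K := ⌈1 / a⌉₊
  have hK : 1 < a * (K + 1 : ℕ) := by
    have := mul_le_mul_of_nonneg_left (Nat.le_ceil (1 / a)) ha.le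
    rw [mul_one_div_cancel ha.ne'] at this
    push_cast
    linarith
  set M := max 1 (c ^ a) ^ (K + 1).choose 2
  refine IsBigO.of_bound (2 ^ (K + 2) * M) ?_
  filter_upwards [eventually_mul_rpow_pow_le_half hc hK, eventually_gt_atTop 0,
    eventually_ge_atTop ⌈c⌉₊] with n hhalf hn hcn
  have hn1 : (1 : ℝ) ≤ n := by exact_mod_cast hn
  have hn : (0 : ℝ) < n := by exact_mod_cast hn
  set r := (c / n) ^ a
  have hr0 : 0 ≤ r := rpow_nonneg (div_nonneg hc hn.le) a
  have hr1 : r ≤ 1 := rpow_le_one (div_nonneg hc hn.le)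
    ((div_le_one hn).2 (Nat.ceil_le.1 hcn)) ha.le
  have hterm0 (k : ℕ) : 0 ≤ (n : ℝ) ^ k * r ^ k.choose 2 := by positivity
  rw [norm_of_nonneg (sum_nonneg fun k _ => hterm0 k), norm_of_nonneg (by positivity)]
  refine (sum_range_le_of_le_of_halving (m := K + 1)
    (A := M * (n : ℝ) ^ ((K : ℝ) - a * (K.choose 2 : ℝ))) (by positivity) (fun k hk => ?_)
    (fun k hk => ?_) _).trans_eq (by ring)
  · rw [pow_mul_rpow_pow_choose_two hc hn]
    have hM : (c ^ a) ^ k.choose 2 ≤ M :=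
      calc (c ^ a) ^ k.choose 2 ≤ max 1 (c ^ a) ^ k.choose 2 := by gcongr; exact le_max_right _ _
        _ ≤ M := pow_le_pow_right₀ (le_max_left _ _) (Nat.choose_le_choose 2 hk)
    exact mul_le_mul hM (rpow_le_rpow_of_exponent_le hn1 (sub_mul_choose_two_le_ceil ha k))
      (by positivity) (by positivity)
  · have hstep : (n : ℝ) * r ^ k ≤ 1 / 2 :=
      (mul_le_mul_of_nonneg_left (pow_le_pow_of_le_one hr0 hr1 hk) hn.le).trans hhalf
    calc (n : ℝ) ^ (k + 1) * r ^ (k + 1).choose 2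
        = (n : ℝ) ^ k * r ^ k.choose 2 * (n * r ^ k) := by
          rw [Nat.choose_succ_succ', Nat.choose_one_right, pow_add, pow_succ]; ring
      _ ≤ (n : ℝ) ^ k * r ^ k.choose 2 * (1 / 2) := by gcongr
      _ = _ := by ring

end Asymptotics

theorem stmt6_general (c a : ℝ) (hc : 0 < c) (ha0 : 0 < a) :
    (fun n : ℕ => ∫ f, (maxCliqueCount n f : ℝ)
        ∂ erMeasure n (min (ENNReal.ofReal ((c / n) ^ a)) 1) (min_le_right _ _))
      =O[atTop] (fun n : ℕ => (n : ℝ) ^ ((⌈1 / a⌉₊ : ℝ) - a * (⌈1 / a⌉₊.choose 2 : ℝ))) ∧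
    (a = 1 → (fun n : ℕ => ∫ f, (maxCliqueCount n f : ℝ)
        ∂ erMeasure n (min (ENNReal.ofReal ((c / n) ^ a)) 1) (min_le_right _ _))
      =O[atTop] (fun n : ℕ => (n : ℝ))) := by
  have hfirst : (fun n : ℕ => ∫ f, (maxCliqueCount n f : ℝ)
        ∂ erMeasure n (min (ENNReal.ofReal ((c / n) ^ a)) 1) (min_le_right _ _))
      =O[atTop] fun n : ℕ => ∑ k ∈ range (n + 1), (n : ℝ) ^ k * ((c / n) ^ a) ^ k.choose 2 := by
    refine Asymptotics.IsBigO.of_bound 1 (.of_forall fun n => ?_)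
    have hr : 0 ≤ (c / n) ^ a := Real.rpow_nonneg (div_nonneg hc.le n.cast_nonneg) a
    rw [one_mul, Real.norm_of_nonneg (integral_nonneg fun f => Nat.cast_nonneg _),
      Real.norm_of_nonneg (sum_nonneg fun k _ => by positivity)]
    exact integral_maxCliqueCount_ofReal_le_sum_pow hr
  have hmain := hfirst.trans (sum_pow_mul_rpow_pow_choose_two_isBigO hc.le ha0)
  refine ⟨hmain, fun ha => ?_⟩
  subst ha
  simpa using hmain

/-- For `p = (c/n)^a` with constants `c > 0`, `a ∈ (0,1]`, the expected number of
maximal cliques in `G(n,p)` is `O(n^x)` with `x = ⌈1/a⌉ - a·C(⌈1/a⌉,2)`;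
in particular for `a = 1` it is `O(n)`. -/
theorem stmt6 (c a : ℝ) (hc : 0 < c) (ha0 : 0 < a) (ha1 : a ≤ 1) :
    (fun n : ℕ => ∫ f, (maxCliqueCount n f : ℝ)
        ∂ erMeasure n (min (ENNReal.ofReal ((c / n) ^ a)) 1) (min_le_right _ _))
      =O[atTop] (fun n : ℕ => (n : ℝ) ^ ((⌈1 / a⌉₊ : ℝ) - a * (⌈1 / a⌉₊.choose 2 : ℝ))) ∧
    (a = 1 → (fun n : ℕ => ∫ f, (maxCliqueCount n f : ℝ)
        ∂ erMeasure n (min (ENNReal.ofReal ((c / n) ^ a)) 1) (min_le_right _ _))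
      =O[atTop] (fun n : ℕ => (n : ℝ))) :=
  stmt6_general c a hc ha0
end
end

section
/- For every constant c > 0 there exist ζ > 0 and n' such that for all n ≥ n', the graph G(n, 1 - c/n) contains at least 2^{ζn} maximal cliques with high probability. -/
/-!
Call a non-edge `{u, v}` of `G` isolated if `u` and `v` are adjacent to every other vertex, i.e.
it is an isolated edge of the complement. Distinct isolated non-edges are vertex-disjoint and
fully joined to each other, so choosing one endpoint from each of `m` of them gives a clique, and
the `2 ^ m` choices extend to distinct maximal cliques. In `G(n, 1 - q)` with `q = c / n` a fixed
pair is an isolated non-edge with probability `q (1 - q) ^ (2n - 4) ≥ (c / n) e^{-4c}`, so their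
number `X` has mean of order `n`. Pairs sharing a vertex are never both isolated and disjoint
pairs are nearly independent, so the variance of `X` is `O(n)`, and Chebyshev's inequality gives
`X ≥ ζ n` with probability `1 - O(1 / n)`.
-/

open MeasureTheory Filter Finset
open scoped ENNReal Classical Topology

noncomputable section

open ProbabilityTheory in
theorem measureReal_card_lt_le {Ω ι : Type*} [MeasurableSpace Ω] {μ : Measure Ω}
    [IsProbabilityMeasure μ] (s : Finset ι) {A : ι → Set Ω} (hA : ∀ i, MeasurableSet (A i))
    {t : ℝ} (ht : t < ∑ i ∈ s, μ.real (A i)) :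
    μ.real {ω | (#{i ∈ s | ω ∈ A i} : ℝ) < t} ≤
      (∑ i ∈ s, ∑ j ∈ s, μ.real (A i ∩ A j) - (∑ i ∈ s, μ.real (A i)) ^ 2) /
        (∑ i ∈ s, μ.real (A i) - t) ^ 2 := by
  set X : Ω → ℝ := fun ω => ∑ i ∈ s, (A i).indicator 1 ω
  have hX : ∀ ω, X ω = #{i ∈ s | ω ∈ A i} := fun ω => by
    simp [X, Set.indicator_apply, Finset.sum_boole]
  have hAA : ∀ i j, MeasurableSet (A i ∩ A j) := fun i j => (hA i).inter (hA j)
  have hX2 : MemLp X 2 μ := by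
    refine MemLp.of_bound (Finset.measurable_sum _ fun i _ =>
      measurable_const.indicator (hA i)).aestronglyMeasurable #s (ae_of_all _ fun ω => ?_)
    rw [hX, Real.norm_natCast]
    exact_mod_cast Finset.card_filter_le _ _
  have hmean : μ[X] = ∑ i ∈ s, μ.real (A i) := by
    rw [integral_finsetSum _ fun i _ => (integrable_const 1).indicator (hA i)]
    exact Finset.sum_congr rfl fun i _ => integral_indicator_one (hA i)
  have hsq : μ[X ^ 2] = ∑ i ∈ s, ∑ j ∈ s, μ.real (A i ∩ A j) := by
    have : X ^ 2 = fun ω => ∑ i ∈ s, ∑ j ∈ s, (A i ∩ A j).indicator 1 ω := by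
      ext ω
      simp only [Pi.pow_apply, X, sq, Finset.sum_mul_sum, Set.inter_indicator_one, Pi.mul_apply]
    rw [this, integral_finsetSum _ fun i _ => integrable_finsetSum _ fun j _ =>
      (integrable_const 1).indicator (hAA i j)]
    refine Finset.sum_congr rfl fun i _ => ?_
    rw [integral_finsetSum _ fun j _ => (integrable_const 1).indicator (hAA i j)]
    exact Finset.sum_congr rfl fun j _ => integral_indicator_one (hAA i j)
  have hsub : {ω | (#{i ∈ s | ω ∈ A i} : ℝ) < t} ⊆
      {ω | ∑ i ∈ s, μ.real (A i) - t ≤ |X ω - μ[X]|} := by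
    intro ω hω
    rw [Set.mem_ofPred_eq, hmean, hX, abs_sub_comm]
    exact (sub_le_sub_left hω.le _).trans (le_abs_self _)
  calc μ.real {ω | (#{i ∈ s | ω ∈ A i} : ℝ) < t}
      ≤ μ.real {ω | ∑ i ∈ s, μ.real (A i) - t ≤ |X ω - μ[X]|} := measureReal_mono hsub
    _ ≤ variance X μ / (∑ i ∈ s, μ.real (A i) - t) ^ 2 :=
      ENNReal.toReal_le_of_le_ofReal (div_nonneg (variance_nonneg _ _) (sq_nonneg _))
        (meas_ge_le_variance_div_sq hX2 (sub_pos.mpr ht))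
    _ = _ := by rw [variance_eq_sub hX2, hsq, hmean]

namespace SimpleGraph

variable {V : Type*} (G : SimpleGraph V)

/-- `M` is an induced matching of the complement of `G`. -/
def IsCoMatching (M : Set (Sym2 V)) : Prop :=
  (∀ e ∈ M, ¬e.IsDiag ∧ e ∉ G.edgeSet) ∧ M.Pairwise fun e e' => ∀ x ∈ e, ∀ y ∈ e', G.Adj x y

def IsIsolatedNonEdge (e : Sym2 V) : Prop :=
  ¬e.IsDiag ∧ e ∉ G.edgeSet ∧ ∀ a ∈ e, ∀ w ∉ e, G.Adj a w

variable {G}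

lemma IsIsolatedNonEdge.notMem_of_ne {e e' : Sym2 V} (he : G.IsIsolatedNonEdge e)
    (he' : G.IsIsolatedNonEdge e') (hne : e ≠ e') {x : V} (hx : x ∈ e) : x ∉ e' := by
  intro hx'
  have hxy := (Sym2.other_ne he'.1 hx').symm
  by_cases hye : Sym2.Mem.other hx' ∈ e
  · exact hne (((Sym2.mem_and_mem_iff hxy).mp ⟨hx, hye⟩).trans (Sym2.other_spec hx'))
  · exact he'.2.1 (Sym2.other_spec hx' ▸ he.2.2 x hx _ hye)

lemma isCoMatching_of_forall_isIsolatedNonEdge {M : Set (Sym2 V)}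
    (hM : ∀ e ∈ M, G.IsIsolatedNonEdge e) : G.IsCoMatching M :=
  ⟨fun e he => ⟨(hM e he).1, (hM e he).2.1⟩, fun e he e' he' hne x hx y hy =>
    (hM e he).2.2 x hx y fun hye => (hM e' he').notMem_of_ne (hM e he) (Ne.symm hne) hy hye⟩

lemma exists_isMaxClique_superset [Finite V] {s : Finset V} (hs : G.IsClique ↑s) :
    ∃ t, s ⊆ t ∧ IsMaxClique G t := by
  obtain ⟨t, hst, ht⟩ := Finite.exists_le_maximal (p := fun t : Finset V => G.IsClique ↑t) hs
  exact ⟨t, hst, ht.1, fun _ hu htu => le_antisymm htu (ht.2 hu htu)⟩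

lemma IsClique.out_snd_notMem {K : Set V} (hK : G.IsClique K) {e : Sym2 V} (hd : ¬e.IsDiag)
    (hne : e ∉ G.edgeSet) (h1 : e.out.1 ∈ K) : e.out.2 ∉ K := by
  have he : s(e.out.1, e.out.2) = e := e.out_eq
  refine fun h2 => hne (he ▸ hK h1 h2 fun h => hd ?_)
  rw [← he, Sym2.mk_isDiag_iff]
  exact h

theorem IsCoMatching.two_pow_card_le_card_maxClique [Fintype V] {M : Finset (Sym2 V)}
    (hM : G.IsCoMatching ↑M) : 2 ^ #M ≤ Nat.card {s : Finset V // IsMaxClique G s} := by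
  let pick (T : Finset (Sym2 V)) (e : Sym2 V) : V := if e ∈ T then e.out.1 else e.out.2
  have pick_mem : ∀ T e, pick T e ∈ e := fun T e => by
    by_cases h : e ∈ T <;> simp [pick, h, Sym2.out_fst_mem, Sym2.out_snd_mem]
  have isClique_pick : ∀ T, G.IsClique ↑(M.image (pick T)) := by
    rintro T _ hx _ hy hne
    obtain ⟨e, he, rfl⟩ := mem_image.mp hx
    obtain ⟨e', he', rfl⟩ := mem_image.mp hy
    exact hM.2 he he' (fun h => hne (h ▸ rfl)) _ (pick_mem T e) _ (pick_mem T e')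
  choose K hsub hK using fun T => exists_isMaxClique_superset (isClique_pick T)
  -- `K T` cannot contain both endpoints of a pair of `M`, so it remembers which ones `T` chose.
  let φ : M.powerset → {s : Finset V // IsMaxClique G s} := fun T => ⟨K T, hK T⟩
  have hφ : Function.LeftInverse
      (fun s => ⟨M.filter fun e => e.out.1 ∈ s.1, mem_powerset.mpr (filter_subset _ _)⟩) φ := by
    rintro ⟨T, hT⟩
    rw [mem_powerset] at hT
    ext e
    simp only [φ, mem_filter]
    constructor
    · rintro ⟨heM, h1⟩
      by_contra heT
      have h2 : e.out.2 ∈ K T := hsub T (mem_image.mpr ⟨e, heM, by simp [pick, heT]⟩)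
      exact (hK T).1.out_snd_notMem (hM.1 e heM).1 (hM.1 e heM).2 h1 h2
    · intro heT
      exact ⟨hT heT, hsub T (mem_image.mpr ⟨e, hT heT, by simp [pick, heT]⟩)⟩
  calc 2 ^ #M = Nat.card M.powerset := by rw [Nat.card_eq_finsetCard, card_powerset]
    _ ≤ _ := Nat.card_le_card_of_injective φ hφ.injective

end SimpleGraph

section CutEdges

variable {V : Type*} [Fintype V] [DecidableEq V]

def cutEdges (S : Finset V) : Finset (Sym2 V) := (S ×ˢ Sᶜ).image fun p => s(p.1, p.2)

lemma card_cutEdges (S : Finset V) : #(cutEdges S) = #S * (Fintype.card V - #S) := by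
  rw [cutEdges, card_image_of_injOn, card_product, card_compl]
  rintro ⟨a, w⟩ h ⟨a', w'⟩ h' heq
  simp only [coe_product, Set.mem_prod, mem_coe, mem_compl] at h h'
  rcases Sym2.eq_iff.mp heq with ⟨rfl, rfl⟩ | ⟨rfl, rfl⟩
  · rfl
  · exact absurd h.1 h'.2

lemma forall_mem_cutEdges {S : Finset V} {P : Sym2 V → Prop} :
    (∀ d ∈ cutEdges S, P d) ↔ ∀ a ∈ S, ∀ w ∉ S, P s(a, w) := by
  simp only [cutEdges, forall_mem_image, mem_product, mem_compl, and_imp, Prod.forall]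
  exact forall_congr' fun a => forall_comm

lemma notMem_cutEdges {S : Finset V} {d : Sym2 V} (hd : ∀ x ∈ d, x ∈ S) : d ∉ cutEdges S := by
  simp only [cutEdges, mem_image, mem_product, mem_compl, not_exists, not_and]
  rintro ⟨a, w⟩ ⟨-, hw⟩ rfl
  exact hw (hd w (Sym2.mem_mk_right a w))

end CutEdges

lemma erGraph_adj {n : ℕ} {f : Sym2 (Fin n) → Bool} {a b : Fin n} :
    (erGraph n f).Adj a b ↔ a ≠ b ∧ f s(a, b) = true := by
  rw [erGraph, SimpleGraph.fromRel_adj, Sym2.eq_swap (a := b)]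
  exact and_congr_right fun _ => or_self_iff

lemma mem_edgeSet_erGraph {n : ℕ} {f : Sym2 (Fin n) → Bool} {e : Sym2 (Fin n)}
    (hd : ¬e.IsDiag) :
    e ∈ (erGraph n f).edgeSet ↔ f e = true := by
  induction e using Sym2.ind with
  | _ a b =>
    rw [SimpleGraph.mem_edgeSet, erGraph_adj, and_iff_right (Sym2.mk_isDiag_iff.not.mp hd)]

lemma isIsolatedNonEdge_erGraph_iff {n : ℕ} {f : Sym2 (Fin n) → Bool} {e : Sym2 (Fin n)}
    (hd : ¬e.IsDiag) :
    (erGraph n f).IsIsolatedNonEdge e ↔ f e = false ∧ ∀ a ∈ e, ∀ w ∉ e, f s(a, w) = true := by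
  simp only [SimpleGraph.IsIsolatedNonEdge, mem_edgeSet_erGraph hd, hd, not_false_eq_true,
    true_and, Bool.not_eq_true, erGraph_adj]
  refine and_congr_right fun _ => forall₂_congr fun a ha => forall₂_congr fun w hw => ?_
  exact and_iff_right fun h => hw (h ▸ ha)

instance (n : ℕ) (p : ℝ≥0∞) (hp : p ≤ 1) : IsProbabilityMeasure (erMeasure n p hp) := by
  unfold erMeasure; infer_instance

set_option linter.deprecated false in
lemma erMeasure_cylinder {n : ℕ} {p : ℝ≥0∞} (hp : p ≤ 1) (S : Finset (Sym2 (Fin n)))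
    (g : Sym2 (Fin n) → Bool) :
    erMeasure n p hp {f | ∀ d ∈ S, f d = g d} = ∏ d ∈ S, cond (g d) p (1 - p) := by
  have hS : {f : Sym2 (Fin n) → Bool | ∀ d ∈ S, f d = g d} = (S : Set _).pi fun d => {g d} := by
    ext f; simp
  rw [hS, erMeasure, Measure.pi_pi_finset]
  refine Finset.prod_congr rfl fun d _ => ?_
  rw [PMF.toMeasure_apply_singleton _ _ (measurableSet_singleton _)]
  refine (PMF.bernoulli_apply _ _).trans ?_
  cases g d <;>
    simp [ENNReal.coe_sub, ENNReal.coe_toNNReal (ne_top_of_le_ne_top ENNReal.one_ne_top hp)]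

lemma measureReal_erMeasure_nonEdges_edges {n : ℕ} {q : ℝ} (hq₀ : 0 ≤ q) (hq₁ : q ≤ 1)
    (hp : ENNReal.ofReal (1 - q) ≤ 1) {F T : Finset (Sym2 (Fin n))} (hFT : Disjoint F T) :
    (erMeasure n (ENNReal.ofReal (1 - q)) hp).real
        {f | (∀ d ∈ F, f d = false) ∧ ∀ d ∈ T, f d = true} = q ^ #F * (1 - q) ^ #T := by
  have hset : {f : Sym2 (Fin n) → Bool | (∀ d ∈ F, f d = false) ∧ ∀ d ∈ T, f d = true} =
      {f | ∀ d ∈ F ∪ T, f d = decide (d ∉ F)} := by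
    ext f
    simp only [Set.mem_ofPred_eq, mem_union, or_imp, forall_and]
    refine and_congr (forall₂_congr fun d hd => by simp [hd])
      (forall₂_congr fun d hd => by simp [disjoint_right.mp hFT hd])
  have hF : ∀ d ∈ F, cond (decide (d ∉ F)) (ENNReal.ofReal (1 - q)) (1 - ENNReal.ofReal (1 - q))
      = ENNReal.ofReal q := fun d hd => by
    rw [← ENNReal.ofReal_one, ← ENNReal.ofReal_sub _ (by linarith)]
    simp [hd]
  have hT : ∀ d ∈ T, cond (decide (d ∉ F)) (ENNReal.ofReal (1 - q)) (1 - ENNReal.ofReal (1 - q))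
      = ENNReal.ofReal (1 - q) := fun d hd => by simp [disjoint_right.mp hFT hd]
  rw [hset, measureReal_def, erMeasure_cylinder, prod_union hFT, prod_congr rfl hF,
    prod_congr rfl hT, prod_const, prod_const, ENNReal.toReal_mul, ENNReal.toReal_pow,
    ENNReal.toReal_pow, ENNReal.toReal_ofReal hq₀, ENNReal.toReal_ofReal (by linarith)]

lemma measureReal_isIsolatedNonEdge {n : ℕ} {q : ℝ} (hq₀ : 0 ≤ q) (hq₁ : q ≤ 1)
    (hp : ENNReal.ofReal (1 - q) ≤ 1) {e : Sym2 (Fin n)} (hd : ¬e.IsDiag) :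
    (erMeasure n (ENNReal.ofReal (1 - q)) hp).real {f | (erGraph n f).IsIsolatedNonEdge e} =
      q * (1 - q) ^ (2 * (n - 2)) := by
  have hset : {f | (erGraph n f).IsIsolatedNonEdge e} =
      {f | (∀ d ∈ ({e} : Finset _), f d = false) ∧ ∀ d ∈ cutEdges e.toFinset, f d = true} := by
    ext f
    simp [isIsolatedNonEdge_erGraph_iff hd, forall_mem_cutEdges]
  rw [hset, measureReal_erMeasure_nonEdges_edges hq₀ hq₁ hp (disjoint_singleton_left.mpr
      (notMem_cutEdges fun x hx => Sym2.mem_toFinset.mpr hx)),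
    card_singleton, card_cutEdges, Sym2.card_toFinset_of_not_isDiag e hd, Fintype.card_fin,
    pow_one]

lemma measureReal_isIsolatedNonEdge_inter_le {n : ℕ} {q : ℝ} (hq₀ : 0 ≤ q) (hq₁ : q ≤ 1)
    (hp : ENNReal.ofReal (1 - q) ≤ 1) {e e' : Sym2 (Fin n)} (hne : e ≠ e') :
    (erMeasure n (ENNReal.ofReal (1 - q)) hp).real
        ({f | (erGraph n f).IsIsolatedNonEdge e} ∩ {f | (erGraph n f).IsIsolatedNonEdge e'}) ≤
      q ^ 2 * (1 - q) ^ (4 * (n - 4)) := by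
  rcases Set.eq_empty_or_nonempty
      ({f | (erGraph n f).IsIsolatedNonEdge e} ∩ {f | (erGraph n f).IsIsolatedNonEdge e'})
    with h | ⟨f₀, he, he'⟩
  · rw [h, measureReal_empty]
    positivity
  -- Both events force `e` and `e'` to be non-edges and every edge leaving `e ∪ e'` to be present.
  have hd : ¬e.IsDiag := he.1
  have hd' : ¬e'.IsDiag := he'.1
  set S := e.toFinset ∪ e'.toFinset
  have hS : #S = 4 := by
    rw [card_union_of_disjoint (disjoint_left.mpr fun x hx hx' => he.notMem_of_ne he' hne
      (Sym2.mem_toFinset.mp hx) (Sym2.mem_toFinset.mp hx')),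
      Sym2.card_toFinset_of_not_isDiag e hd, Sym2.card_toFinset_of_not_isDiag e' hd']
  have hsub :
      {f | (erGraph n f).IsIsolatedNonEdge e} ∩ {f | (erGraph n f).IsIsolatedNonEdge e'} ⊆
      {f | (∀ d ∈ ({e, e'} : Finset _), f d = false) ∧ ∀ d ∈ cutEdges S, f d = true} := by
    rintro f ⟨hfe, hfe'⟩
    rw [Set.mem_ofPred_eq, isIsolatedNonEdge_erGraph_iff hd] at hfe
    rw [Set.mem_ofPred_eq, isIsolatedNonEdge_erGraph_iff hd'] at hfe'
    refine ⟨by simp [hfe.1, hfe'.1], forall_mem_cutEdges.mpr fun a ha w hw => ?_⟩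
    simp only [S, mem_union, Sym2.mem_toFinset, not_or] at ha hw
    exact ha.elim (fun ha => hfe.2 a ha w hw.1) fun ha => hfe'.2 a ha w hw.2
  have hFT : Disjoint ({e, e'} : Finset _) (cutEdges S) := by
    refine disjoint_left.mpr fun d hd => notMem_cutEdges fun x hx => ?_
    rcases mem_insert.mp hd with rfl | hd
    · exact mem_union_left _ (Sym2.mem_toFinset.mpr hx)
    · exact mem_union_right _ (Sym2.mem_toFinset.mpr (mem_singleton.mp hd ▸ hx))
  calc _ ≤ _ := measureReal_mono hsub
    _ = q ^ 2 * (1 - q) ^ (4 * (n - 4)) := by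
      rw [measureReal_erMeasure_nonEdges_edges hq₀ hq₁ hp hFT, card_pair hne, card_cutEdges, hS,
        Fintype.card_fin]

lemma card_filter_not_isDiag {α : Type*} [Fintype α] [DecidableEq α] :
    #{e : Sym2 α | ¬e.IsDiag} = (Fintype.card α).choose 2 := by
  rw [← Fintype.card_subtype, Sym2.card_subtype_not_diag]

def isolatedNonEdgeCount (n : ℕ) (f : Sym2 (Fin n) → Bool) : ℕ :=
  #{e | (erGraph n f).IsIsolatedNonEdge e}

lemma two_pow_isolatedNonEdgeCount_le_maxCliqueCount (n : ℕ) (f : Sym2 (Fin n) → Bool) :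
    2 ^ isolatedNonEdgeCount n f ≤ maxCliqueCount n f :=
  (SimpleGraph.isCoMatching_of_forall_isIsolatedNonEdge fun _ he =>
    (mem_filter.mp (mem_coe.mp he)).2).two_pow_card_le_card_maxClique

lemma measureReal_isolatedNonEdgeCount_lt_le {n : ℕ} {q : ℝ} (hq₀ : 0 ≤ q) (hq₁ : q ≤ 1)
    (hp : ENNReal.ofReal (1 - q) ≤ 1) {t : ℝ}
    (ht : t < n.choose 2 * (q * (1 - q) ^ (2 * (n - 2)))) :
    (erMeasure n (ENNReal.ofReal (1 - q)) hp).real {f | (isolatedNonEdgeCount n f : ℝ) < t} ≤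
      (n.choose 2 * (q * (1 - q) ^ (2 * (n - 2))) +
          n.choose 2 ^ 2 * (q ^ 2 * (1 - q) ^ (4 * (n - 4))) -
          (n.choose 2 * (q * (1 - q) ^ (2 * (n - 2)))) ^ 2) /
        (n.choose 2 * (q * (1 - q) ^ (2 * (n - 2))) - t) ^ 2 := by
  set μ := erMeasure n (ENNReal.ofReal (1 - q)) hp
  set E : Finset (Sym2 (Fin n)) := {e | ¬e.IsDiag}
  set A : Sym2 (Fin n) → Set (Sym2 (Fin n) → Bool) :=
    fun e => {f | (erGraph n f).IsIsolatedNonEdge e}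
  have hE : #E = n.choose 2 := by rw [card_filter_not_isDiag, Fintype.card_fin]
  have hmean : ∑ e ∈ E, μ.real (A e) = n.choose 2 * (q * (1 - q) ^ (2 * (n - 2))) := by
    rw [sum_congr rfl fun e he => measureReal_isIsolatedNonEdge hq₀ hq₁ hp (mem_filter.mp he).2,
      sum_const, hE, nsmul_eq_mul]
  have hpair : ∀ e e', μ.real (A e ∩ A e') ≤
      (if e = e' then μ.real (A e) else 0) + q ^ 2 * (1 - q) ^ (4 * (n - 4)) := by
    intro e e'
    split_ifs with h
    · rw [h, Set.inter_self]
      exact le_add_of_nonneg_right (by positivity)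
    · rw [zero_add]
      exact measureReal_isIsolatedNonEdge_inter_le hq₀ hq₁ hp h
  have hsq : ∑ e ∈ E, ∑ e' ∈ E, μ.real (A e ∩ A e') ≤ n.choose 2 * (q * (1 - q) ^ (2 * (n - 2))) +
      n.choose 2 ^ 2 * (q ^ 2 * (1 - q) ^ (4 * (n - 4))) := by
    calc _ ≤ ∑ e ∈ E, ∑ e' ∈ E,
          ((if e = e' then μ.real (A e) else 0) + q ^ 2 * (1 - q) ^ (4 * (n - 4))) :=
          sum_le_sum fun e _ => sum_le_sum fun e' _ => hpair e e'
      _ = _ := by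
        simp only [sum_add_distrib, sum_ite_eq, sum_ite_mem, inter_self, sum_const, hE,
          nsmul_eq_mul, hmean]
        ring
  have hcount : ∀ f, isolatedNonEdgeCount n f = #{e ∈ E | f ∈ A e} := fun f => by
    rw [isolatedNonEdgeCount, filter_filter]
    exact congrArg card (filter_congr fun e _ => (and_iff_right_of_imp And.left).symm)
  simp only [hcount]
  refine (measureReal_card_lt_le E (fun _ => MeasurableSet.of_discrete) (hmean ▸ ht)).trans ?_
  rw [hmean]
  gcongr

lemma exp_neg_two_mul_le_one_sub_pow {x : ℝ} (h0 : 0 ≤ x) (h1 : x ≤ 1 / 2) (k : ℕ) :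
    Real.exp (-(2 * x * k)) ≤ (1 - x) ^ k := by
  have hx : Real.exp (-(2 * x)) ≤ 1 - x := by
    rw [Real.exp_neg, inv_le_iff_one_le_mul₀ (Real.exp_pos _)]
    nlinarith [Real.add_one_le_exp (2 * x)]
  calc Real.exp (-(2 * x * k)) = Real.exp (-(2 * x)) ^ k := by rw [← Real.exp_nat_mul]; ring_nf
    _ ≤ (1 - x) ^ k := pow_le_pow_left₀ (Real.exp_pos _).le hx k

theorem measureReal_isolatedNonEdgeCount_lt_mul_le {c : ℝ} (hc : 0 < c) {n : ℕ} (hn : 4 ≤ n)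
    (hcn : 2 * c ≤ n) (hp : ENNReal.ofReal (1 - c / n) ≤ 1) :
    (erMeasure n (ENNReal.ofReal (1 - c / n)) hp).real
        {f | (isolatedNonEdgeCount n f : ℝ) < c * Real.exp (-(4 * c)) / 8 * n} ≤
      (c / 2 + 2 * c ^ 3) / (c * Real.exp (-(4 * c)) / 8) ^ 2 / n := by
  set ζ := c * Real.exp (-(4 * c)) / 8
  set q := c / n
  set a := (1 - q) ^ (2 * (n - 2))
  set b := (1 - q) ^ (4 * (n - 4))
  set N := ((n.choose 2 : ℕ) : ℝ)
  have hn0 : (0 : ℝ) < n := by positivity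
  have hn4 : (4 : ℝ) ≤ n := by exact_mod_cast hn
  have hq₀ : 0 ≤ q := by positivity
  have hq : q ≤ 1 / 2 := by rw [div_le_iff₀ hn0]; linarith
  have hqn : q * n = c := div_mul_cancel₀ c hn0.ne'
  have hN : N = n * (n - 1) / 2 := Nat.cast_choose_two ℝ n
  have hNq : N * q ≤ c * n / 2 := by rw [hN]; nlinarith
  have hζ : 0 < ζ := by positivity
  have ha : Real.exp (-(4 * c)) ≤ a := by
    refine le_trans (Real.exp_le_exp.mpr ?_) (exp_neg_two_mul_le_one_sub_pow hq₀ hq _)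
    have : ((2 * (n - 2) : ℕ) : ℝ) ≤ 2 * n := by
      have : 2 * (n - 2) ≤ 2 * n := by omega
      exact_mod_cast this
    nlinarith
  have ha1 : a ≤ 1 := pow_le_one₀ (by linarith) (by linarith)
  have hab : b - a ^ 2 ≤ 8 * q := by
    have hsplit : a ^ 2 = b * (1 - q) ^ 8 := by
      rw [← pow_mul, ← pow_add]; congr 1; omega
    have hb : b ≤ 1 := pow_le_one₀ (by linarith) (by linarith)
    have hb0 : 0 ≤ b := pow_nonneg (by linarith) _
    have := one_add_mul_le_pow (a := -q) (by linarith) 8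
    rw [hsplit]
    push_cast at this
    nlinarith
  have hNq₀ : 0 ≤ N * q := by positivity
  have hmean : 2 * ζ * n ≤ N * (q * a) := by
    have hNq' : c * n / 4 ≤ N * q := by rw [hN]; nlinarith
    calc 2 * ζ * n = c * n / 4 * Real.exp (-(4 * c)) := by ring
      _ ≤ N * q * a := mul_le_mul hNq' ha (Real.exp_pos _).le hNq₀
      _ = N * (q * a) := by ring
  have hvar : N * (q * a) + N ^ 2 * (q ^ 2 * b) - (N * (q * a)) ^ 2 ≤ (c / 2 + 2 * c ^ 3) * n := by
    have h1 : N * (q * a) ≤ c * n / 2 := by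
      rw [← mul_assoc]; exact (mul_le_of_le_one_right hNq₀ ha1).trans hNq
    have h2 : (N * q) ^ 2 * (b - a ^ 2) ≤ (c * n / 2) ^ 2 * (8 * q) :=
      (mul_le_mul_of_nonneg_left hab (sq_nonneg _)).trans
        (mul_le_mul_of_nonneg_right (pow_le_pow_left₀ hNq₀ hNq 2) (by positivity))
    have h3 : (c * n / 2) ^ 2 * (8 * q) = 2 * c ^ 3 * n := by rw [← hqn]; ring
    nlinarith
  refine (measureReal_isolatedNonEdgeCount_lt_le hq₀ (by linarith) hp (by nlinarith)).trans ?_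
  calc _ ≤ (c / 2 + 2 * c ^ 3) * n / (ζ * n) ^ 2 :=
        div_le_div₀ (by positivity) hvar (by positivity)
          (pow_le_pow_left₀ (by positivity) (by linarith) 2)
    _ = _ := by field_simp

theorem one_sub_div_le_measureReal_maxCliqueCount {c : ℝ} (hc : 0 < c) {n : ℕ} (hn : 4 ≤ n)
    (hcn : 2 * c ≤ n) (hp : ENNReal.ofReal (1 - c / n) ≤ 1) :
    1 - (c / 2 + 2 * c ^ 3) / (c * Real.exp (-(4 * c)) / 8) ^ 2 / n ≤
      (erMeasure n (ENNReal.ofReal (1 - c / n)) hp).real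
        {f | (2 : ℝ) ^ (c * Real.exp (-(4 * c)) / 8 * n) ≤ maxCliqueCount n f} := by
  set ζ := c * Real.exp (-(4 * c)) / 8
  set μ := erMeasure n (ENNReal.ofReal (1 - c / n)) hp
  have hsub : {f | (2 : ℝ) ^ (ζ * n) ≤ maxCliqueCount n f}ᶜ ⊆
      {f | (isolatedNonEdgeCount n f : ℝ) < ζ * n} := by
    intro f hf
    simp only [Set.mem_compl_iff, Set.mem_ofPred_eq, not_le] at hf ⊢
    by_contra! h
    refine hf.not_ge ?_
    calc (2 : ℝ) ^ (ζ * n) ≤ 2 ^ (isolatedNonEdgeCount n f : ℝ) :=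
          Real.rpow_le_rpow_of_exponent_le one_le_two h
      _ ≤ maxCliqueCount n f := by
        rw [Real.rpow_natCast]
        exact_mod_cast two_pow_isolatedNonEdgeCount_le_maxCliqueCount n f
  have hcompl := probReal_compl_eq_one_sub (μ := μ)
    (MeasurableSet.of_discrete (s := {f | (2 : ℝ) ^ (ζ * n) ≤ maxCliqueCount n f}))
  have := measureReal_mono (μ := μ) hsub
  have := measureReal_isolatedNonEdgeCount_lt_mul_le hc hn hcn hp
  linarith

/-- For every `c > 0` there are `ζ > 0` and a threshold `n'` such that for `n ≥ n'`,
with high probability `G(n, 1 - c/n)` contains at least `2^{ζn}` maximal cliques. -/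
theorem stmt8 (c : ℝ) (hc : 0 < c) :
    ∃ ζ : ℝ, 0 < ζ ∧
      Tendsto (fun n : ℕ =>
          erMeasure n (ENNReal.ofReal (1 - c / n))
            (ENNReal.ofReal_le_one.mpr (by
              have : 0 ≤ c / n := div_nonneg hc.le (Nat.cast_nonneg n)
              linarith))
            {f | (2 : ℝ) ^ (ζ * n) ≤ (maxCliqueCount n f : ℝ)})
        atTop (𝓝 1) := by
  refine ⟨c * Real.exp (-(4 * c)) / 8, by positivity, ?_⟩
  rw [← ENNReal.tendsto_toReal_iff (fun n => measure_ne_top _ _) ENNReal.one_ne_top,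
    ENNReal.toReal_one]
  have hlow : Tendsto (fun n : ℕ => 1 - (c / 2 + 2 * c ^ 3) / (c * Real.exp (-(4 * c)) / 8) ^ 2 / n)
      atTop (𝓝 1) := by
    simpa using (tendsto_const_nhds (x := (1 : ℝ))).sub (tendsto_const_div_atTop_nhds_zero_nat
      ((c / 2 + 2 * c ^ 3) / (c * Real.exp (-(4 * c)) / 8) ^ 2))
  refine tendsto_of_tendsto_of_tendsto_of_le_of_le' hlow tendsto_const_nhds ?_
    (Eventually.of_forall fun n => measureReal_le_one)
  filter_upwards [eventually_ge_atTop 4, eventually_ge_atTop ⌈2 * c⌉₊] with n hn hcn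
  exact one_sub_div_le_measureReal_maxCliqueCount hc hn (Nat.ceil_le.mp hcn) _
end
end

section
/- Consider the d-dimensional torus with the maximum norm and evenly spaced boxes B_1,...,B_{2k} of height h and gap g (so 2k(g+h) = 1), where B_i = [(i-1)(g+h), (i-1)(g+h)+h] × [0, 1/2 - g]^{d-1}. Suppose vertices v_1,...,v_{2k} with v_i ∈ B_i all have weight in the interval [w_ℓ, w_u) with w_ℓ = (1/2 - g)^{d/2} √(μn) and w_u = (1/2 - h)^{d/2} √(μn). In the threshold GIRG connection rule (u and v adjacent iff w_u w_v ≥ μ n ‖x_u - x_v‖^d), these 2k vertices induce a co-matching: v_i and v_j are adjacent if and only if |i - j| ≠ k. -/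
/-!
Opposite boxes are `k` steps of length `g + h = 1/(2k)` apart in the first coordinate, so their
points are at circular distance at least `1/2 - h` there; any other two boxes are at most
`1/2 - g` apart in the first coordinate, and all boxes lie in `[0, 1/2 - g]` in the remaining
coordinates. Since `w_ℓ² = μn(1/2 - g)^d` and `w_u² = μn(1/2 - h)^d`, the product of two weights
in `[w_ℓ, w_u)` clears the threshold `μn‖x_u - x_v‖^d` exactly for the non-opposite pairs.
-/

noncomputable section

/-- Distance on the circle ℝ/ℤ between representatives in `[0,1)`. -/
def torusDist (x y : ℝ) : ℝ := min |x - y| (1 - |x - y|)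

def torusDistSup {d : ℕ} (x y : Fin d → ℝ) : ℝ := ⨆ i, torusDist (x i) (y i)

lemma torusDist_comm (x y : ℝ) : torusDist x y = torusDist y x := by
  rw [torusDist, torusDist, abs_sub_comm]

lemma torusDistSup_comm {d : ℕ} (x y : Fin d → ℝ) : torusDistSup x y = torusDistSup y x :=
  iSup_congr fun _ => torusDist_comm _ _

lemma torusDist_le_of_mem_Icc {a b c : ℝ} (ha : a ∈ Set.Icc 0 c) (hb : b ∈ Set.Icc 0 c) :
    torusDist a b ≤ c :=
  (min_le_left _ _).trans <| abs_sub_le_iff.2 ⟨by linarith [ha.2, hb.1], by linarith [ha.1, hb.2]⟩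

lemma torusDist_le_torusDistSup {d : ℕ} (x y : Fin d → ℝ) (l : Fin d) :
    torusDist (x l) (y l) ≤ torusDistSup x y :=
  le_ciSup (f := fun l => torusDist (x l) (y l)) (Set.finite_range _).bddAbove l

lemma torusDistSup_le_iff {d : ℕ} [Nonempty (Fin d)] {x y : Fin d → ℝ} {c : ℝ} :
    torusDistSup x y ≤ c ↔ ∀ l, torusDist (x l) (y l) ≤ c :=
  ciSup_le_iff (Set.finite_range _).bddAbove

section EvenlySpacedBoxes

variable {g h : ℝ} {k i j : ℕ} {a b : ℝ}

lemma half_sub_le_torusDist_of_opposite (hsum : 2 * (k : ℝ) * (g + h) = 1)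
    (hijk : i = j + k) (ha : a ∈ Set.Icc (i * (g + h)) (i * (g + h) + h))
    (hb : b ∈ Set.Icc (j * (g + h)) (j * (g + h) + h)) :
    1 / 2 - h ≤ torusDist a b := by
  subst hijk
  push_cast at ha
  obtain ⟨ha₁, ha₂⟩ := ha
  obtain ⟨hb₁, hb₂⟩ := hb
  have hab : |a - b| ≤ 1 / 2 + h := abs_sub_le_iff.2 ⟨by linarith, by linarith⟩
  exact le_min ((by linarith : 1 / 2 - h ≤ a - b).trans (le_abs_self _)) (by linarith)

lemma torusDist_mem_Icc_of_not_opposite (hsum : 2 * (k : ℝ) * (g + h) = 1) (hg : 0 ≤ g)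
    (hh : 0 ≤ h) (hji : j < i) (hi : i < 2 * k) (hijk : i ≠ j + k)
    (ha : a ∈ Set.Icc (i * (g + h)) (i * (g + h) + h))
    (hb : b ∈ Set.Icc (j * (g + h)) (j * (g + h) + h)) :
    torusDist a b ∈ Set.Icc 0 (1 / 2 - g) := by
  obtain ⟨m, rfl⟩ := Nat.exists_eq_add_of_lt hji
  have hm : ((m + 1 : ℕ) : ℝ) + 1 ≤ 2 * k := by exact_mod_cast (by omega : m + 1 + 1 ≤ 2 * k)
  push_cast at ha hm
  obtain ⟨ha₁, ha₂⟩ := ha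
  obtain ⟨hb₁, hb₂⟩ := hb
  have hs : 0 ≤ g + h := by linarith
  have hm_le : ((m : ℝ) + 1) * (g + h) ≤ (2 * k - 1) * (g + h) :=
    mul_le_mul_of_nonneg_right (by linarith) hs
  have hsub : g ≤ a - b := by linarith [mul_nonneg (Nat.cast_nonneg (α := ℝ) m) hs]
  rw [torusDist, abs_of_nonneg (hg.trans hsub)]
  refine ⟨le_min (by linarith) (by linarith), ?_⟩
  rcases lt_or_gt_of_ne (show m + 1 ≠ k by omega) with hlt | hgt
  · have hlt' : ((m + 2 : ℕ) : ℝ) ≤ k := by exact_mod_cast hlt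
    push_cast at hlt'
    have hmk : ((m : ℝ) + 1) * (g + h) ≤ (k - 1) * (g + h) :=
      mul_le_mul_of_nonneg_right (by linarith) hs
    exact (min_le_left _ _).trans (by linarith)
  · have hgt' : ((k + 1 : ℕ) : ℝ) ≤ ((m + 1 : ℕ) : ℝ) := by exact_mod_cast hgt
    push_cast at hgt'
    have hmk : ((k : ℝ) + 1) * (g + h) ≤ (m + 1) * (g + h) :=
      mul_le_mul_of_nonneg_right hgt' hs
    exact (min_le_right _ _).trans (by linarith)

end EvenlySpacedBoxes

lemma rpow_half_mul_sqrt {c : ℝ} (hc : 0 ≤ c) (d : ℕ) (M : ℝ) :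
    c ^ ((d : ℝ) / 2) * √M = √(M * c ^ d) := by
  rw [div_eq_mul_one_div, Real.rpow_natCast_mul hc, ← Real.sqrt_eq_rpow,
    Real.sqrt_mul' _ (pow_nonneg hc d), mul_comm]

lemma le_mul_of_sqrt_le {X u v : ℝ} (hX : 0 ≤ X) (hu : √X ≤ u) (hv : √X ≤ v) : X ≤ u * v :=
  calc X = √X * √X := (Real.mul_self_sqrt hX).symm
    _ ≤ u * v := mul_le_mul hu hv (Real.sqrt_nonneg X) ((Real.sqrt_nonneg X).trans hu)

lemma mul_lt_of_lt_sqrt {X u v : ℝ} (hu₀ : 0 ≤ u) (hv₀ : 0 ≤ v) (hu : u < √X) (hv : v < √X) :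
    u * v < X :=
  calc u * v < √X * √X := mul_lt_mul'' hu hv hu₀ hv₀
    _ = X := Real.mul_self_sqrt (Real.sqrt_pos.1 (hu₀.trans_lt hu)).le

theorem stmt10_general (d k n : ℕ) (hd : 0 < d) (hn : 0 < n)
    (μ g h : ℝ) (hμ : 0 < μ) (hh : 0 < h) (hgh : h < g) (hg2 : g < 1 / 2)
    (hsum : 2 * (k : ℝ) * (g + h) = 1)
    (x : Fin (2 * k) → Fin d → ℝ) (w : Fin (2 * k) → ℝ)
    (hbox : ∀ i : Fin (2 * k),
      x i ⟨0, hd⟩ ∈ Set.Icc ((i : ℝ) * (g + h)) ((i : ℝ) * (g + h) + h) ∧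
      ∀ l : Fin d, l ≠ ⟨0, hd⟩ → x i l ∈ Set.Icc (0 : ℝ) (1 / 2 - g))
    (hw : ∀ i : Fin (2 * k), w i ∈
      Set.Ico ((1 / 2 - g) ^ ((d : ℝ) / 2) * Real.sqrt (μ * n))
              ((1 / 2 - h) ^ ((d : ℝ) / 2) * Real.sqrt (μ * n))) :
    ∀ i j : Fin (2 * k), i ≠ j →
      (μ * n * torusDistSup (x i) (x j) ^ d ≤ w i * w j ↔
        max (i : ℕ) (j : ℕ) - min (i : ℕ) (j : ℕ) ≠ k) := by
  have : Nonempty (Fin d) := ⟨⟨0, hd⟩⟩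
  have hμn : 0 ≤ μ * n := by positivity
  simp only [rpow_half_mul_sqrt (by linarith : 0 ≤ 1 / 2 - g),
    rpow_half_mul_sqrt (by linarith : 0 ≤ 1 / 2 - h)] at hw
  have hw₀ (i : Fin (2 * k)) : 0 ≤ w i := (Real.sqrt_nonneg _).trans (hw i).1
  intro i j hij
  wlog hji : (j : ℕ) < i generalizing i j
  · have := this j i hij.symm (by omega)
    rwa [torusDistSup_comm, mul_comm (w j), max_comm, min_comm] at this
  rw [show max (i : ℕ) (j : ℕ) - min (i : ℕ) (j : ℕ) ≠ k ↔ (i : ℕ) ≠ j + k by omega]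
  by_cases hopp : (i : ℕ) = j + k
  · simp only [hopp, ne_eq, not_true_eq_false, iff_false, not_le]
    have hD := (half_sub_le_torusDist_of_opposite hsum hopp (hbox i).1 (hbox j).1).trans
      (torusDist_le_torusDistSup (x i) (x j) ⟨0, hd⟩)
    calc w i * w j < μ * n * (1 / 2 - h) ^ d :=
          mul_lt_of_lt_sqrt (hw₀ i) (hw₀ j) (hw i).2 (hw j).2
      _ ≤ μ * n * torusDistSup (x i) (x j) ^ d := by gcongr; linarith
  · simp only [ne_eq, hopp, not_false_eq_true, iff_true]
    have hfirst := torusDist_mem_Icc_of_not_opposite hsum (by linarith) hh.le hji i.isLt hopp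
      (hbox i).1 (hbox j).1
    have hD : torusDistSup (x i) (x j) ≤ 1 / 2 - g := torusDistSup_le_iff.2 fun l => by
      by_cases hl : l = ⟨0, hd⟩
      · exact hl ▸ hfirst.2
      · exact torusDist_le_of_mem_Icc ((hbox i).2 l hl) ((hbox j).2 l hl)
    have hD₀ := hfirst.1.trans (torusDist_le_torusDistSup (x i) (x j) ⟨0, hd⟩)
    calc μ * n * torusDistSup (x i) (x j) ^ d ≤ μ * n * (1 / 2 - g) ^ d := by gcongr
      _ ≤ w i * w j := le_mul_of_sqrt_le (by positivity) (hw i).1 (hw j).1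

/-- Evenly spaced boxes of height `h` and gap `g` on the `d`-dimensional torus with the
max norm: if each box `B_i` contains a vertex `v_i` with weight in `[w_ℓ, w_u)`, then
under the threshold GIRG rule (`u ~ v` iff `w_u w_v ≥ μ n ‖x_u - x_v‖^d`) the vertices
`v_1, …, v_{2k}` induce a co-matching: `v_i ~ v_j` iff `|i - j| ≠ k`. -/
theorem stmt10 (d k n : ℕ) (hd : 0 < d) (hk : 0 < k) (hn : 0 < n)
    (μ g h : ℝ) (hμ : 0 < μ) (hh : 0 < h) (hgh : h < g) (hg2 : g < 1 / 2)
    (hsum : 2 * (k : ℝ) * (g + h) = 1)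
    (x : Fin (2 * k) → Fin d → ℝ) (w : Fin (2 * k) → ℝ)
    (hbox : ∀ i : Fin (2 * k),
      x i ⟨0, hd⟩ ∈ Set.Icc ((i : ℝ) * (g + h)) ((i : ℝ) * (g + h) + h) ∧
      ∀ l : Fin d, l ≠ ⟨0, hd⟩ → x i l ∈ Set.Icc (0 : ℝ) (1 / 2 - g))
    (hw : ∀ i : Fin (2 * k), w i ∈
      Set.Ico ((1 / 2 - g) ^ ((d : ℝ) / 2) * Real.sqrt (μ * n))
              ((1 / 2 - h) ^ ((d : ℝ) / 2) * Real.sqrt (μ * n))) :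
    ∀ i j : Fin (2 * k), i ≠ j →
      (μ * n * torusDistSup (x i) (x j) ^ d ≤ w i * w j ↔
        max (i : ℕ) (j : ℕ) - min (i : ℕ) (j : ℕ) ≠ k) :=
  stmt10_general d k n hd hn μ g h hμ hh hgh hg2 hsum x w hbox hw
end
end

section
/- Let τ ∈ (2,3), μ > 0, and let x_1 ≤ x_2 ≤ ... ≤ x_k ≥ 1 be weights in an inhomogeneous random graph on n vertices where an additional vertex with Pareto(τ)-distributed weight w connects to a vertex of weight x with probability min(w x/(μn), 1). Then ∫_1^∞ w^{-τ} ∏_{i=1}^k min(w x_i/(μn), 1) dw ≤ C (μn)^{1-τ} x_1 x_2^{τ-2} for a constant C > 0 depending only on τ and k. -/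
/-!
Every factor `min (w * x i / (μ * n)) 1` lies in `[0, 1]`, so the product is at most
`min (w x₁ / (μ n)) 1 * min (w x₂ / (μ n)) 1 ≤ (w x₁ / (μ n)) * min (w x₂ / (μ n)) 1`.
The substitution `u = w x₂ / (μ n)` turns `∫₀^∞ w^(1-τ) min (w x₂ / (μ n)) 1 dw` into
`(x₂ / (μ n))^(τ-2) ∫₀^∞ u^(1-τ) min u 1 du`, and the last integral equals
`1 / (3 - τ) + 1 / (τ - 2)`: it converges at `0` because `τ < 3` and at `∞` because `τ > 2`.
-/

open MeasureTheory Finset Real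

theorem integrableOn_rpow_neg_mul_min_one {a : ℝ} (ha₁ : 1 < a) (ha₂ : a < 2) :
    IntegrableOn (fun u : ℝ => u ^ (-a) * min u 1) (Set.Ioi 0) := by
  rw [← Set.Ioc_union_Ioi_eq_Ioi zero_le_one]
  refine IntegrableOn.union ?_ ?_
  · have h : IntegrableOn (fun u : ℝ => u ^ (1 - a)) (Set.Ioc 0 1) := by
      rw [← intervalIntegrable_iff_integrableOn_Ioc_of_le zero_le_one]
      exact intervalIntegral.intervalIntegrable_rpow' (by linarith)
    refine (integrableOn_congr_fun (fun u hu => ?_) measurableSet_Ioc).mpr h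
    rw [min_eq_left hu.2, sub_eq_neg_add, rpow_add hu.1, rpow_one]
  · refine (integrableOn_congr_fun (fun u hu => ?_) measurableSet_Ioi).mpr
      (integrableOn_Ioi_rpow_of_lt (by linarith : -a < -1) zero_lt_one)
    rw [min_eq_right (le_of_lt hu), mul_one]

theorem integral_rpow_neg_mul_min_one {a : ℝ} (ha₁ : 1 < a) (ha₂ : a < 2) :
    ∫ u in Set.Ioi 0, u ^ (-a) * min u 1 = 1 / (2 - a) + 1 / (a - 1) := by
  have hint := integrableOn_rpow_neg_mul_min_one ha₁ ha₂
  rw [← Set.Ioc_union_Ioi_eq_Ioi zero_le_one, setIntegral_union (Set.Ioc_disjoint_Ioi le_rfl)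
    measurableSet_Ioi (hint.mono_set Set.Ioc_subset_Ioi_self)
    (hint.mono_set (Set.Ioi_subset_Ioi zero_le_one))]
  have hsmall : ∫ u in Set.Ioc 0 1, u ^ (-a) * min u 1 = 1 / (2 - a) := by
    rw [setIntegral_congr_fun measurableSet_Ioc (g := fun u : ℝ => u ^ (1 - a)) fun u hu => by
        simp only [min_eq_left hu.2, sub_eq_neg_add, rpow_add hu.1, rpow_one],
      ← intervalIntegral.integral_of_le zero_le_one,
      integral_rpow (Or.inl (by linarith)), one_rpow, zero_rpow (by linarith)]
    ring_nf
  have hlarge : ∫ u in Set.Ioi 1, u ^ (-a) * min u 1 = 1 / (a - 1) := by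
    rw [setIntegral_congr_fun measurableSet_Ioi (g := fun u : ℝ => u ^ (-a)) fun u hu => by
        rw [min_eq_right (le_of_lt hu), mul_one],
      integral_Ioi_rpow_of_lt (by linarith) zero_lt_one, one_rpow]
    rw [div_eq_div_iff (by linarith) (by linarith)]
    ring
  rw [hsmall, hlarge]

theorem rpow_neg_mul_min_mul_one_eq {a q w : ℝ} (hq : 0 < q) (hw : 0 ≤ w) :
    w ^ (-a) * min (w * q) 1 = q ^ a * ((q * w) ^ (-a) * min (q * w) 1) := by
  rw [mul_rpow hq.le hw, rpow_neg hq.le, mul_comm w q]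
  field_simp [(rpow_pos_of_pos hq a).ne']

theorem integrableOn_rpow_neg_mul_min_mul_one {a q : ℝ} (ha₁ : 1 < a) (ha₂ : a < 2)
    (hq : 0 < q) : IntegrableOn (fun w : ℝ => w ^ (-a) * min (w * q) 1) (Set.Ioi 0) := by
  have h : IntegrableOn (fun w : ℝ => q ^ a * ((q * w) ^ (-a) * min (q * w) 1)) (Set.Ioi 0) :=
    Integrable.const_mul ((integrableOn_Ioi_comp_mul_left_iff
      (fun u : ℝ => u ^ (-a) * min u 1) 0 hq).mpr
      (by simpa using integrableOn_rpow_neg_mul_min_one ha₁ ha₂)) _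
  exact (integrableOn_congr_fun (fun w hw => rpow_neg_mul_min_mul_one_eq hq (le_of_lt hw))
    measurableSet_Ioi).mpr h

theorem integral_rpow_neg_mul_min_mul_one {a q : ℝ} (ha₁ : 1 < a) (ha₂ : a < 2)
    (hq : 0 < q) :
    ∫ w in Set.Ioi 0, w ^ (-a) * min (w * q) 1 = (1 / (2 - a) + 1 / (a - 1)) * q ^ (a - 1) := by
  rw [setIntegral_congr_fun measurableSet_Ioi fun w hw =>
      rpow_neg_mul_min_mul_one_eq hq (le_of_lt hw),
    integral_const_mul, integral_comp_mul_left_Ioi (fun u : ℝ => u ^ (-a) * min u 1) 0 hq,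
    mul_zero, integral_rpow_neg_mul_min_one ha₁ ha₂, smul_eq_mul, rpow_sub_one hq.ne']
  ring

theorem Finset.prod_le_mul_of_ne {ι R : Type*} [Fintype ι] [CommMonoidWithZero R] [Preorder R]
    [ZeroLEOneClass R] [PosMulMono R] {f : ι → R} (h0 : ∀ l, 0 ≤ f l) (h1 : ∀ l, f l ≤ 1)
    {i j : ι} (hij : i ≠ j) : ∏ l, f l ≤ f i * f j := by
  classical
  rw [← prod_pair hij]
  exact prod_le_prod_of_subset_of_le_one (subset_univ _) (fun l _ => h0 l) (fun l _ _ => h1 l)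

theorem rpow_neg_mul_prod_min_le {ι : Type*} [Fintype ι] {τ A w : ℝ} (hA : 0 < A) (hw : 0 < w)
    {x : ι → ℝ} (hx : ∀ l, 0 ≤ x l) {i j : ι} (hij : i ≠ j) :
    w ^ (-τ) * ∏ l, min (w * x l / A) 1 ≤
      x i / A * (w ^ (-(τ - 1)) * min (w * (x j / A)) 1) := by
  have hmin : ∀ l, 0 ≤ min (w * x l / A) 1 := fun l =>
    le_min (by have := hx l; positivity) zero_le_one
  calc w ^ (-τ) * ∏ l, min (w * x l / A) 1
      ≤ w ^ (-τ) * (min (w * x i / A) 1 * min (w * x j / A) 1) := by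
        gcongr
        exact prod_le_mul_of_ne hmin (fun l => min_le_right _ _) hij
    _ ≤ w ^ (-τ) * (w * x i / A * min (w * x j / A) 1) := by
        gcongr
        · exact hmin j
        · exact min_le_left _ _
    _ = x i / A * (w ^ (-(τ - 1)) * min (w * (x j / A)) 1) := by
        rw [neg_sub, sub_eq_neg_add, rpow_add hw, rpow_one]
        simp only [mul_div_assoc]
        ring

theorem setIntegral_Ioi_one_rpow_neg_mul_prod_min_le {ι : Type*} [Fintype ι] {τ A : ℝ}
    (hτ₂ : 2 < τ) (hτ₃ : τ < 3) (hA : 0 < A) {x : ι → ℝ} (hx : ∀ l, 0 ≤ x l) {i j : ι}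
    (hij : i ≠ j) (hxj : 0 < x j) :
    ∫ w in Set.Ioi 1, w ^ (-τ) * ∏ l, min (w * x l / A) 1 ≤
      (1 / (3 - τ) + 1 / (τ - 2)) * A ^ (1 - τ) * x i * x j ^ (τ - 2) := by
  have hq : 0 < x j / A := div_pos hxj hA
  have hg : IntegrableOn (fun w : ℝ => x i / A * (w ^ (-(τ - 1)) * min (w * (x j / A)) 1))
      (Set.Ioi 0) :=
    (integrableOn_rpow_neg_mul_min_mul_one (by linarith) (by linarith) hq).const_mul _
  calc ∫ w in Set.Ioi 1, w ^ (-τ) * ∏ l, min (w * x l / A) 1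
      ≤ ∫ w in Set.Ioi 1, x i / A * (w ^ (-(τ - 1)) * min (w * (x j / A)) 1) := by
        refine integral_mono_of_nonneg ?_ (hg.mono_set (Set.Ioi_subset_Ioi zero_le_one)) ?_ <;>
          filter_upwards [ae_restrict_mem measurableSet_Ioi] with w (hw : 1 < w)
        · exact mul_nonneg (by positivity) (prod_nonneg fun l _ =>
            le_min (by have := hx l; positivity) zero_le_one)
        · exact rpow_neg_mul_prod_min_le hA (one_pos.trans hw) hx hij
    _ ≤ ∫ w in Set.Ioi 0, x i / A * (w ^ (-(τ - 1)) * min (w * (x j / A)) 1) := by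
        refine setIntegral_mono_set hg ?_ (Set.Ioi_subset_Ioi zero_le_one).eventuallyLE
        filter_upwards [ae_restrict_mem measurableSet_Ioi] with w (hw : 0 < w)
        have := hx i
        have : 0 ≤ min (w * (x j / A)) 1 := le_min (by positivity) zero_le_one
        positivity
    _ = (1 / (3 - τ) + 1 / (τ - 2)) * A ^ (1 - τ) * x i * x j ^ (τ - 2) := by
        rw [integral_const_mul, integral_rpow_neg_mul_min_mul_one (by linarith) (by linarith) hq,
          show τ - 1 - 1 = τ - 2 by ring, show 2 - (τ - 1) = 3 - τ by ring, div_rpow hxj.le hA.le,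
          show (1 : ℝ) - τ = -(τ - 2) - 1 by ring, rpow_sub hA _ 1, rpow_neg hA.le, rpow_one]
        field_simp

/-- For `τ ∈ (2,3)` and `k ≥ 2` there is a constant `C > 0` (depending only on `τ, k`)
such that for ordered weights `1 ≤ x_1 ≤ … ≤ x_k`,
`∫_1^∞ w^{-τ} ∏_i min(w x_i/(μn), 1) dw ≤ C (μn)^{1-τ} x_1 x_2^{τ-2}`. -/
theorem stmt18 (τ : ℝ) (hτ2 : 2 < τ) (hτ3 : τ < 3) (k : ℕ) (hk : 2 ≤ k) :
    ∃ C : ℝ, 0 < C ∧ ∀ (n : ℕ) (μ : ℝ), 0 < n → 0 < μ →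
      ∀ x : Fin k → ℝ, (∀ i, 1 ≤ x i) → Monotone x →
        (∫ w in Set.Ioi (1 : ℝ), w ^ (-τ) * ∏ i, min (w * x i / (μ * n)) 1) ≤
          C * (μ * n) ^ (1 - τ) * x ⟨0, by omega⟩ * (x ⟨1, by omega⟩) ^ (τ - 2) := by
  have h3 : 0 < 3 - τ := by linarith
  have h2 : 0 < τ - 2 := by linarith
  refine ⟨1 / (3 - τ) + 1 / (τ - 2), by positivity, fun n μ hn hμ x hx _ => ?_⟩
  exact setIntegral_Ioi_one_rpow_neg_mul_prod_min_le hτ2 hτ3 (by positivity)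
    (fun l => zero_le_one.trans (hx l)) (by simp [Fin.ext_iff]) (zero_lt_one.trans_le (hx _))
end

section
/- For τ ∈ (2,3) and k ≥ 3, the integral ∫_0^1...∫_0^1 x_3^{1-τ}...x_k^{1-τ} ∫_0^∞ ∫_{x_1}^∞ x_1^{k-1-τ} x_2^{1-τ} ∏_{i=3}^k min(x_2 x_i, 1) e^{-μ^{1-τ} x_1 x_2^{τ-2}} dx_2 dx_1 dx_3 ... dx_k is finite. -/
/-!
Since `x₃, …, xₖ < 1`, each factor obeys `min(x₂xᵢ, 1) ≤ min(x₂, x₂^θ) xᵢ^θ` for any `θ ∈ [0, 1]`,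
which decouples the coordinates. Dropping the constraint `x₁ < x₂`, the integral is then bounded
by a product of one-dimensional integrals `∫₀¹ t^{1-τ+θ} dt`, finite as soon as `θ > τ - 2`, and
a two-dimensional one. In the latter the `x₁`-integral is a Gamma integral equal to a multiple
of `x₂^{-(τ-2)(k-τ)}`, leaving `∫₀^∞ x₂^e min(x₂, x₂^θ)^{k-2} dx₂` with `e = 1 - τ - (τ-2)(k-τ)`.
Near `0` the exponent is `e + k - 2 = -1 + (k - τ)(3 - τ) > -1`, and near `∞` it is
`e + θ(k-2) < -1` provided `θ(k-2) < (τ-2)(k+1-τ)`; such a `θ > τ - 2` exists since `τ < 3`.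
-/

open MeasureTheory Set
open scoped ENNReal

namespace MeasureTheory

variable {α : Type*} [MeasurableSpace α] (ν : Measure α) [SigmaFinite ν]

theorem lintegral_pi_fin_succ {n : ℕ} {f : (Fin (n + 1) → α) → ℝ≥0∞} (hf : Measurable f) :
    ∫⁻ x, f x ∂Measure.pi (fun _ ↦ ν)
      = ∫⁻ a, ∫⁻ y, f (Fin.cons a y) ∂Measure.pi (fun _ ↦ ν) ∂ν := by
  rw [← ((measurePreserving_piFinSuccAbove (fun _ ↦ ν) 0).symm).lintegral_comp hf, lintegral_prod]
  · simp [MeasurableEquiv.piFinSuccAbove_symm_apply, Fin.consEquiv]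
  · exact (hf.comp (MeasurableEquiv.measurable _)).aemeasurable

theorem lintegral_pi_prod_eq_pow {g : α → ℝ≥0∞} (hg : Measurable g) (n : ℕ) :
    ∫⁻ x : Fin n → α, ∏ j, g (x j) ∂Measure.pi (fun _ ↦ ν) = (∫⁻ a, g a ∂ν) ^ n := by
  induction n with
  | zero => simp
  | succ n ih =>
    rw [lintegral_pi_fin_succ ν (by fun_prop)]
    simp only [Fin.prod_univ_succ, Fin.cons_zero, Fin.cons_succ]
    simp_rw [lintegral_const_mul _ (by fun_prop : Measurable fun y : Fin n → α ↦ ∏ j, g (y j)), ih]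
    rw [lintegral_mul_const _ hg, pow_succ']

theorem lintegral_pi_fin_two_mul_prod {n : ℕ} {F : α → α → ℝ≥0∞}
    (hF : Measurable (Function.uncurry F)) {g : α → ℝ≥0∞} (hg : Measurable g) :
    ∫⁻ x : Fin (n + 2) → α, F (x 0) (x 1) * ∏ j : Fin n, g (x j.succ.succ) ∂Measure.pi (fun _ ↦ ν)
      = (∫⁻ a, ∫⁻ b, F a b ∂ν ∂ν) * (∫⁻ a, g a ∂ν) ^ n := by
  have hF' : ∀ a, Measurable (F a) := fun a ↦ hF.comp (measurable_const.prodMk measurable_id)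
  have hinner : ∀ a, Measurable fun y : Fin (n + 1) → α ↦
      F a (y 0) * ∏ j : Fin n, g (y j.succ) := fun a ↦ by fun_prop
  rw [lintegral_pi_fin_succ ν (by fun_prop)]
  simp only [Fin.cons_zero, Fin.cons_one, Fin.cons_succ]
  simp_rw [lintegral_pi_fin_succ ν (hinner _)]
  simp only [Fin.cons_zero, Fin.cons_succ]
  simp_rw [lintegral_const_mul _ (by fun_prop : Measurable fun y : Fin n → α ↦ ∏ j, g (y j)),
    lintegral_pi_prod_eq_pow ν hg, lintegral_mul_const _ (hF' _)]
  rw [lintegral_mul_const _ (by exact hF.lintegral_prod_right')]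

end MeasureTheory

namespace Real

theorem min_one_le_rpow {y θ : ℝ} (hy : 0 ≤ y) (hθ0 : 0 ≤ θ) (hθ1 : θ ≤ 1) :
    min y 1 ≤ y ^ θ := by
  rcases le_total y 1 with h | h
  · exact (min_le_left _ _).trans (self_le_rpow_of_le_one hy h hθ1)
  · exact (min_le_right _ _).trans (one_le_rpow h hθ0)

theorem min_mul_one_le {a b θ : ℝ} (ha : 0 ≤ a) (hb0 : 0 ≤ b) (hb1 : b ≤ 1)
    (hθ0 : 0 ≤ θ) (hθ1 : θ ≤ 1) : min (a * b) 1 ≤ min a (a ^ θ) * b ^ θ := by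
  rw [min_mul_of_nonneg _ _ (rpow_nonneg hb0 θ), ← mul_rpow ha hb0]
  exact le_min ((min_le_left _ _).trans
    (mul_le_mul_of_nonneg_left (self_le_rpow_of_le_one hb0 hb1 hθ1) ha))
    (min_one_le_rpow (mul_nonneg ha hb0) hθ0 hθ1)

theorem prod_rpow_mul_min_mul_one_le {n : ℕ} {p θ b : ℝ} (hb : 0 ≤ b) {y : Fin n → ℝ}
    (hy : ∀ j, y j ∈ Ioc 0 1) (hθ0 : 0 ≤ θ) (hθ1 : θ ≤ 1) :
    ∏ j, y j ^ p * min (b * y j) 1 ≤ min b (b ^ θ) ^ n * ∏ j, y j ^ (p + θ) := by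
  rw [← Fin.prod_const n (min b (b ^ θ)), ← Finset.prod_mul_distrib]
  refine Finset.prod_le_prod (fun j _ ↦ ?_) (fun j _ ↦ ?_)
  · exact mul_nonneg (rpow_nonneg (hy j).1.le _) (le_min (mul_nonneg hb (hy j).1.le) zero_le_one)
  · calc y j ^ p * min (b * y j) 1 ≤ y j ^ p * (min b (b ^ θ) * y j ^ θ) :=
          mul_le_mul_of_nonneg_left (min_mul_one_le hb (hy j).1.le (hy j).2 hθ0 hθ1)
            (rpow_nonneg (hy j).1.le _)
      _ = min b (b ^ θ) * y j ^ (p + θ) := by rw [rpow_add (hy j).1]; ring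

end Real

theorem setLIntegral_Ioc_rpow_ne_top {p : ℝ} (hp : -1 < p) :
    ∫⁻ t in Ioc 0 1, ENNReal.ofReal (t ^ p) ≠ ⊤ :=
  ((intervalIntegral.intervalIntegrable_rpow' hp).1.setLIntegral_lt_top).ne

theorem setLIntegral_Ioi_one_rpow_ne_top {p : ℝ} (hp : p < -1) :
    ∫⁻ t in Ioi 1, ENNReal.ofReal (t ^ p) ≠ ⊤ :=
  ((integrableOn_Ioi_rpow_iff one_pos).2 hp).setLIntegral_lt_top.ne

theorem lintegral_Ioi_rpow_mul_min_rpow_pow_ne_top {e θ : ℝ} {n : ℕ} (h0 : -1 < e + n)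
    (h1 : e + θ * n < -1) (hθ : θ ≤ 1) :
    ∫⁻ b in Ioi 0, ENNReal.ofReal (b ^ e * min b (b ^ θ) ^ n) ≠ ⊤ := by
  rw [← Ioc_union_Ioi_eq_Ioi zero_le_one,
    lintegral_union measurableSet_Ioi (Ioc_disjoint_Ioi le_rfl)]
  refine ENNReal.add_ne_top.2 ⟨?_, ?_⟩
  · rw [setLIntegral_congr_fun measurableSet_Ioc (g := fun b ↦ ENNReal.ofReal (b ^ (e + n)))
      fun b hb ↦ ?_]
    · exact setLIntegral_Ioc_rpow_ne_top h0
    rw [min_eq_left (Real.self_le_rpow_of_le_one hb.1.le hb.2 hθ), ← Real.rpow_natCast,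
      ← Real.rpow_add hb.1]
  · rw [setLIntegral_congr_fun measurableSet_Ioi (g := fun b ↦ ENNReal.ofReal (b ^ (e + θ * n)))
      fun b hb ↦ ?_]
    · exact setLIntegral_Ioi_one_rpow_ne_top h1
    have hb0 : 0 < b := zero_lt_one.trans hb
    rw [min_eq_right (Real.rpow_le_self_of_one_le hb.le hθ), ← Real.rpow_natCast,
      ← Real.rpow_mul hb0.le, ← Real.rpow_add hb0]

theorem lintegral_Ioi_rpow_mul_exp_neg_mul {q r : ℝ} (hq : -1 < q) (hr : 0 < r) :
    ∫⁻ a in Ioi 0, ENNReal.ofReal (a ^ q * Real.exp (-r * a))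
      = ENNReal.ofReal (r ^ (-(q + 1)) * Real.Gamma (q + 1)) := by
  have h := integral_rpow_mul_exp_neg_mul_rpow one_pos hq hr
  simp only [Real.rpow_one, div_one, mul_one] at h
  rw [← h, ofReal_integral_eq_lintegral_ofReal]
  · have hint := integrableOn_rpow_mul_exp_neg_mul_rpow hq one_pos hr
    simp only [Real.rpow_one] at hint
    exact hint
  · filter_upwards [ae_restrict_mem measurableSet_Ioi] with a ha
    exact mul_nonneg (Real.rpow_nonneg (le_of_lt ha) _) (Real.exp_pos _).le

theorem lintegral_Ioi_lintegral_Ioi_rpow_mul_exp_neg_mul_rpow {K c s : ℝ} (hK : 0 < K)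
    (hc : 0 < c) (h : ℝ → ℝ) :
    ∫⁻ b in Ioi 0, ∫⁻ a in Ioi 0,
        ENNReal.ofReal (a ^ (K - 1) * Real.exp (-(c * b ^ s) * a)) * ENNReal.ofReal (h b)
      = ENNReal.ofReal (c ^ (-K) * Real.Gamma K) *
          ∫⁻ b in Ioi 0, ENNReal.ofReal (b ^ (-(s * K)) * h b) := by
  rw [← lintegral_const_mul' _ _ ENNReal.ofReal_ne_top]
  refine setLIntegral_congr_fun measurableSet_Ioi fun b (hb : 0 < b) ↦ ?_
  have hr : 0 < c * b ^ s := mul_pos hc (Real.rpow_pos_of_pos hb s)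
  rw [lintegral_mul_const' _ _ ENNReal.ofReal_ne_top,
    lintegral_Ioi_rpow_mul_exp_neg_mul (by linarith) hr, sub_add_cancel,
    Real.mul_rpow hc.le (Real.rpow_nonneg hb.le s), ← Real.rpow_mul hb.le, ← ENNReal.ofReal_mul,
    ← ENNReal.ofReal_mul]
  · ring_nf
  all_goals positivity

theorem Fin.prod_filter_two_le {n : ℕ} {M : Type*} [CommMonoid M] (f : Fin (n + 2) → M) :
    ∏ i ∈ Finset.univ.filter (fun i : Fin (n + 2) ↦ 2 ≤ (i : ℕ)), f i
      = ∏ j : Fin n, f j.succ.succ := by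
  simp [Finset.prod_filter, Fin.prod_univ_succ]

noncomputable def pairMajorant (n : ℕ) (τ c θ : ℝ) (a b : ℝ) : ℝ≥0∞ :=
  ENNReal.ofReal (a ^ ((n : ℝ) + 2 - τ - 1) * Real.exp (-(c * b ^ (τ - 2)) * a)) *
    ENNReal.ofReal (b ^ (1 - τ) * min b (b ^ θ) ^ n)

noncomputable def coordMajorant (τ θ : ℝ) : ℝ → ℝ≥0∞ :=
  (Ioo 0 1).indicator fun t ↦ ENNReal.ofReal (t ^ (1 - τ + θ))

theorem measurable_pairMajorant (n : ℕ) (τ c θ : ℝ) :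
    Measurable (Function.uncurry (pairMajorant n τ c θ)) := by
  unfold pairMajorant; fun_prop

theorem measurable_coordMajorant (τ θ : ℝ) : Measurable (coordMajorant τ θ) :=
  Measurable.indicator (by fun_prop) measurableSet_Ioo

theorem integrand_le_majorant {n : ℕ} {τ c θ : ℝ} (hθ0 : 0 ≤ θ) (hθ1 : θ ≤ 1)
    {x : Fin (n + 2) → ℝ} (hx0 : 0 < x 0) (hx1 : 0 < x 1)
    (hx : ∀ i : Fin (n + 2), 2 ≤ (i : ℕ) → x i ∈ Ioo 0 1) :
    ENNReal.ofReal (x 0 ^ (((n + 2 : ℕ) : ℝ) - 1 - τ) * x 1 ^ (1 - τ) *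
        (∏ i ∈ Finset.univ.filter fun i : Fin (n + 2) ↦ 2 ≤ (i : ℕ),
          x i ^ (1 - τ) * min (x 1 * x i) 1) * Real.exp (-c * x 0 * x 1 ^ (τ - 2)))
      ≤ pairMajorant n τ c θ (x 0) (x 1) * ∏ j : Fin n, coordMajorant τ θ (x j.succ.succ) := by
  have hy : ∀ j : Fin n, x j.succ.succ ∈ Ioo 0 1 := fun j ↦ hx _ (by simp)
  have hprod := Real.prod_rpow_mul_min_mul_one_le (p := 1 - τ) hx1.le
    (fun j ↦ Ioo_subset_Ioc_self (hy j)) hθ0 hθ1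
  simp only [pairMajorant, coordMajorant, indicator_of_mem (hy _)]
  rw [← ENNReal.ofReal_prod_of_nonneg (fun j _ ↦ Real.rpow_nonneg (hy j).1.le _),
    ← ENNReal.ofReal_mul (by positivity), ← ENNReal.ofReal_mul (by positivity),
    Fin.prod_filter_two_le]
  refine ENNReal.ofReal_le_ofReal ?_
  rw [show -c * x 0 * x 1 ^ (τ - 2) = -(c * x 1 ^ (τ - 2)) * x 0 by ring,
    show ((n + 2 : ℕ) : ℝ) - 1 - τ = (n : ℝ) + 2 - τ - 1 by push_cast; ring]
  calc _ ≤ x 0 ^ ((n : ℝ) + 2 - τ - 1) * x 1 ^ (1 - τ) *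
        (min (x 1) (x 1 ^ θ) ^ n * ∏ j : Fin n, x j.succ.succ ^ (1 - τ + θ)) *
        Real.exp (-(c * x 1 ^ (τ - 2)) * x 0) := by gcongr
    _ = _ := by ring

theorem setLIntegral_le_majorant {n : ℕ} {τ c θ : ℝ} (hθ0 : 0 ≤ θ) (hθ1 : θ ≤ 1) :
    ∫⁻ x in {x : Fin (n + 2) → ℝ | 0 < x 0 ∧ x 0 < x 1 ∧
        ∀ i : Fin (n + 2), 2 ≤ (i : ℕ) → x i ∈ Ioo (0 : ℝ) 1},
      ENNReal.ofReal (x 0 ^ (((n + 2 : ℕ) : ℝ) - 1 - τ) * x 1 ^ (1 - τ) *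
        (∏ i ∈ Finset.univ.filter fun i : Fin (n + 2) ↦ 2 ≤ (i : ℕ),
          x i ^ (1 - τ) * min (x 1 * x i) 1) * Real.exp (-c * x 0 * x 1 ^ (τ - 2)))
      ≤ (∫⁻ a in Ioi 0, ∫⁻ b in Ioi 0, pairMajorant n τ c θ a b) *
          (∫⁻ t, coordMajorant τ θ t) ^ n := by
  have hF := measurable_pairMajorant n τ c θ
  have hg := measurable_coordMajorant τ θ
  calc _ ≤ ∫⁻ x in {x : Fin (n + 2) → ℝ | 0 < x 0 ∧ x 0 < x 1 ∧
          ∀ i : Fin (n + 2), 2 ≤ (i : ℕ) → x i ∈ Ioo (0 : ℝ) 1},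
          pairMajorant n τ c θ (x 0) (x 1) * ∏ j : Fin n, coordMajorant τ θ (x j.succ.succ) :=
        setLIntegral_mono (by fun_prop) fun x ⟨h0, h01, hx⟩ ↦
          integrand_le_majorant hθ0 hθ1 h0 (h0.trans h01) hx
    _ ≤ ∫⁻ x in univ.pi fun _ ↦ Ioi (0 : ℝ),
          pairMajorant n τ c θ (x 0) (x 1) * ∏ j : Fin n, coordMajorant τ θ (x j.succ.succ) := by
        refine lintegral_mono_set fun x ⟨h0, h01, hx⟩ i _ ↦ ?_
        rcases i with ⟨_ | _ | m, hm⟩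
        exacts [h0, h0.trans h01, (hx _ (by simp)).1]
    _ = (∫⁻ a in Ioi 0, ∫⁻ b in Ioi 0, pairMajorant n τ c θ a b) *
          (∫⁻ t in Ioi 0, coordMajorant τ θ t) ^ n := by
        rw [volume_pi, Measure.restrict_pi_pi, lintegral_pi_fin_two_mul_prod _ hF hg]
    _ ≤ _ := by gcongr; exact Measure.restrict_le_self

theorem lintegral_coordMajorant_ne_top {τ θ : ℝ} (h : τ - 2 < θ) :
    ∫⁻ t, coordMajorant τ θ t ≠ ⊤ := by
  rw [coordMajorant, lintegral_indicator measurableSet_Ioo]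
  exact ne_top_of_le_ne_top (setLIntegral_Ioc_rpow_ne_top (by linarith))
    (lintegral_mono_set Ioo_subset_Ioc_self)

theorem lintegral_pairMajorant_ne_top {n : ℕ} {τ c θ : ℝ} (hc : 0 < c) (hτ3 : τ < 3)
    (hn : 1 ≤ (n : ℝ)) (hθ1 : θ ≤ 1) (hθn : θ * n < (τ - 2) * (n + 3 - τ)) :
    ∫⁻ a in Ioi 0, ∫⁻ b in Ioi 0, pairMajorant n τ c θ a b ≠ ⊤ := by
  rw [lintegral_lintegral_swap (measurable_pairMajorant n τ c θ).aemeasurable]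
  simp only [pairMajorant]
  rw [lintegral_Ioi_lintegral_Ioi_rpow_mul_exp_neg_mul_rpow (by linarith) hc]
  refine ENNReal.mul_ne_top ENNReal.ofReal_ne_top ?_
  rw [setLIntegral_congr_fun measurableSet_Ioi fun b (hb : 0 < b) ↦ by
    rw [← mul_assoc, ← Real.rpow_add hb]]
  refine lintegral_Ioi_rpow_mul_min_rpow_pow_ne_top ?_ (by linarith) hθ1
  nlinarith [mul_pos (by linarith : (0 : ℝ) < n + 2 - τ) (by linarith : (0 : ℝ) < 3 - τ)]

/-- For `τ ∈ (2,3)`, `μ > 0` and `k ≥ 3`, the integral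
`∫_0^1…∫_0^1 x_3^{1-τ}⋯x_k^{1-τ} ∫_0^∞ ∫_{x_1}^∞ x_1^{k-1-τ} x_2^{1-τ}
∏_{i=3}^k min(x_2 x_i, 1) e^{-μ^{1-τ} x_1 x_2^{τ-2}} dx_2 dx_1 dx_3 ⋯ dx_k`
is finite. (Coordinates: `x 0, x 1` are the paper's `x_1, x_2`; coordinates with
index `≥ 2` are the paper's `x_3, …, x_k` ranging over `(0,1)`.) -/
theorem stmt19 (τ μ : ℝ) (hτ2 : 2 < τ) (hτ3 : τ < 3) (hμ : 0 < μ)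
    (k : ℕ) (hk : 3 ≤ k) :
    (∫⁻ x in {x : Fin k → ℝ | 0 < x ⟨0, by omega⟩ ∧ x ⟨0, by omega⟩ < x ⟨1, by omega⟩ ∧
        ∀ i : Fin k, 2 ≤ (i : ℕ) → x i ∈ Set.Ioo (0 : ℝ) 1},
      ENNReal.ofReal ((x ⟨0, by omega⟩) ^ ((k : ℝ) - 1 - τ) * (x ⟨1, by omega⟩) ^ (1 - τ) *
        (∏ i ∈ Finset.univ.filter fun i : Fin k => 2 ≤ (i : ℕ),
          (x i) ^ (1 - τ) * min (x ⟨1, by omega⟩ * x i) 1) *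
        Real.exp (-(μ ^ (1 - τ)) * x ⟨0, by omega⟩ * (x ⟨1, by omega⟩) ^ (τ - 2)))) ≠ ⊤ := by
  obtain ⟨n, rfl⟩ : ∃ n, k = n + 2 := ⟨k - 2, by omega⟩
  have hn : (1 : ℝ) ≤ n := by exact_mod_cast (by omega : 1 ≤ n)
  have hgap : τ - 2 < (τ - 2) * (n + 3 - τ) / n := by
    rw [lt_div_iff₀ (by linarith)]; nlinarith
  obtain ⟨θ, hθ, hθ'⟩ := exists_between (lt_min (by linarith : τ - 2 < 1) hgap)
  have hθn : θ * n < (τ - 2) * (n + 3 - τ) :=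
    (lt_div_iff₀ (by linarith)).mp (hθ'.trans_le (min_le_right _ _))
  have hθ1 : θ ≤ 1 := hθ'.le.trans (min_le_left _ _)
  simp only [Fin.zero_eta, Fin.mk_one]
  exact ne_top_of_le_ne_top (ENNReal.mul_ne_top
    (lintegral_pairMajorant_ne_top (Real.rpow_pos_of_pos hμ _) hτ3 hn hθ1 hθn)
    (ENNReal.pow_ne_top (lintegral_coordMajorant_ne_top hθ)))
    (setLIntegral_le_majorant (by linarith) hθ1)
end
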